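/- arXiv:2109.06240 — 3 statements merged into one kernel-verified Lean document; each statement's English description precedes it below -/
import Mathlib

section
/- Let f(x) = |x|²/4 on ℝⁿ. For every smooth vector field Y : ℝⁿ → ℝⁿ one has the pointwise identity −2·𝒫Y = ∇(div_f Y) + ℒY + (1/2)·Y, where ℒ acts componentwise. (This is the paper's identity −2𝒫Y = ∇div_f Y + ℒY + Hess_f(·,Y) + Ric(·,Y) on the Gaussian shrinking soliton (ℝⁿ, δ_ij, |x|²/4), where Ric = 0 and Hess_f = (1/2)·Id.) -/
open MeasureTheory Real

noncomputable section

/-- Euclidean space `ℝⁿ`. -/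
abbrev En (n : ℕ) := EuclideanSpace ℝ (Fin n)

variable {n : ℕ}

/-- Partial derivative `∂_i u` in the `i`-th coordinate direction. -/
def pd (i : Fin n) (u : En n → ℝ) (x : En n) : ℝ :=
  fderiv ℝ u x (EuclideanSpace.single i 1)

/-- Euclidean Laplacian `Δu = Σ_i ∂_i∂_i u`. -/
def lap (u : En n → ℝ) (x : En n) : ℝ := ∑ i, pd i (pd i u) x

/-- The drift Laplacian `ℒu = Δu − ⟨x/2, ∇u⟩` for the potential `f(x) = |x|²/4`. -/
def driftLap (u : En n → ℝ) (x : En n) : ℝ :=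
  lap u x - ∑ i, (x i / 2) * pd i u x

/-- The drift Laplacian acting componentwise on vector fields. -/
def driftLapV (Y : En n → Fin n → ℝ) (x : En n) (i : Fin n) : ℝ :=
  driftLap (fun y => Y y i) x

/-- The gradient `∇u` as a vector field. -/
def gradV (u : En n → ℝ) (x : En n) (i : Fin n) : ℝ := pd i u x

/-- The weighted divergence `div_f Y = div Y − ⟨Y, x/2⟩` for `f(x) = |x|²/4`. -/
def divf (Y : En n → Fin n → ℝ) (x : En n) : ℝ :=
  ∑ i, (pd i (fun y => Y y i) x - Y x i * (x i / 2))

/-- `div_f* Y`, the symmetric 2-tensor `(div_f* Y)_{ij} = −(∂_i Y_j + ∂_j Y_i)/2`. -/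
def divfStar (Y : En n → Fin n → ℝ) (x : En n) (i j : Fin n) : ℝ :=
  -(pd i (fun y => Y y j) x + pd j (fun y => Y y i) x) / 2

/-- The weighted divergence of a matrix-valued map:
`(div_f h)_i = Σ_j (∂_j h_{ij} − (x_j/2) h_{ij})`. -/
def divfT (h : En n → Fin n → Fin n → ℝ) (x : En n) (i : Fin n) : ℝ :=
  ∑ j, (pd j (fun y => h y i j) x - (x j / 2) * h x i j)

/-- The operator `𝒫 = div_f ∘ div_f*` on vector fields. -/
def Pop (Y : En n → Fin n → ℝ) : En n → Fin n → ℝ := divfT (divfStar Y)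

/-- The Hessian matrix `(Hess u)_{ij} = ∂_i ∂_j u`. -/
def hess (u : En n → ℝ) (x : En n) (i j : Fin n) : ℝ := pd i (pd j u) x

/-- The Gaussian weight `e^{-f(x)} = e^{-|x|²/4}`. -/
def gw (x : En n) : ℝ := Real.exp (-(‖x‖ ^ 2 / 4))

/-! ### Auxiliary lemmas -/

lemma contDiff_pd {u : En n → ℝ} (hu : ContDiff ℝ (⊤ : ℕ∞) u) (j : Fin n) :
    ContDiff ℝ (⊤ : ℕ∞) (pd j u) := by
  have hd : ContDiff ℝ (⊤ : ℕ∞) (fderiv ℝ u) := hu.fderiv_right (by simp)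
  exact (ContinuousLinearMap.apply ℝ ℝ (EuclideanSpace.single j 1)).contDiff.comp hd

lemma pd_comm {u : En n → ℝ} (hu : ContDiff ℝ (⊤ : ℕ∞) u) (i j : Fin n) (x : En n) :
    pd i (pd j u) x = pd j (pd i u) x := by
  have hd : ContDiff ℝ (⊤ : ℕ∞) (fderiv ℝ u) := hu.fderiv_right (by simp)
  have H : ∀ v w : En n, fderiv ℝ (fun y => fderiv ℝ u y w) x v
      = fderiv ℝ (fderiv ℝ u) x v w := by
    intro v w
    have h1 : HasFDerivAt (fun y => (ContinuousLinearMap.apply ℝ ℝ w) (fderiv ℝ u y))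
        ((ContinuousLinearMap.apply ℝ ℝ w).comp (fderiv ℝ (fderiv ℝ u) x)) x :=
      (ContinuousLinearMap.apply ℝ ℝ w).hasFDerivAt.comp x
        ((hd.differentiable (by simp) x).hasFDerivAt)
    exact congrFun (congrArg _ h1.fderiv) v
  have hsymm : IsSymmSndFDerivAt ℝ u x := hu.contDiffAt.isSymmSndFDerivAt (by rw [minSmoothness_of_isRCLikeNormedField]; exact WithTop.coe_le_coe.mpr (le_top : (2 : ℕ∞) ≤ ⊤))
  unfold pd
  rw [H, H, hsymm]

lemma pd_sum {ι : Type*} (s : Finset ι) (g : ι → En n → ℝ) (i : Fin n) (x : En n)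
    (hg : ∀ k ∈ s, DifferentiableAt ℝ (g k) x) :
    pd i (fun y => ∑ k ∈ s, g k y) x = ∑ k ∈ s, pd i (g k) x := by
  unfold pd; rw [fderiv_fun_sum hg]; simp

lemma pd_sub {g h : En n → ℝ} (i : Fin n) (x : En n)
    (hg : DifferentiableAt ℝ g x) (hh : DifferentiableAt ℝ h x) :
    pd i (fun y => g y - h y) x = pd i g x - pd i h x := by
  unfold pd; rw [fderiv_fun_sub hg hh]; simp

lemma pd_mul {g h : En n → ℝ} (i : Fin n) (x : En n)
    (hg : DifferentiableAt ℝ g x) (hh : DifferentiableAt ℝ h x) :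
    pd i (fun y => g y * h y) x = pd i g x * h x + g x * pd i h x := by
  unfold pd; rw [fderiv_fun_mul hg hh]; simp; ring

lemma pd_negadd_div2 {g h : En n → ℝ} (i : Fin n) (x : En n)
    (hg : DifferentiableAt ℝ g x) (hh : DifferentiableAt ℝ h x) :
    pd i (fun y => -(g y + h y) / 2) x = -(pd i g x + pd i h x) / 2 := by
  unfold pd
  have : (fun y => -(g y + h y) / 2) = fun y => (-(1:ℝ)/2) * (g y + h y) := by
    funext y; ring
  rw [this, fderiv_const_mul (a := fun y => g y + h y) (hg.add hh), fderiv_fun_add hg hh]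
  simp; ring

lemma pd_coord_div2 (i j : Fin n) (x : En n) :
    pd i (fun y : En n => y j / 2) x = (if j = i then 1 else 0) / 2 := by
  unfold pd
  have : (fun y : En n => y j / 2)
      = fun y => (1/2 : ℝ) * ((EuclideanSpace.proj j : En n →L[ℝ] ℝ) y) := by
    funext y; show y j / 2 = 1/2 * y j; ring
  rw [this, fderiv_const_mul ((EuclideanSpace.proj j : En n →L[ℝ] ℝ).differentiableAt),
    ContinuousLinearMap.fderiv]
  simp [EuclideanSpace.single_apply]
  split <;> simp

/-- On the Gaussian shrinking soliton `(ℝⁿ, δ_ij, |x|²/4)`, for every smooth vector field `Y`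
one has the pointwise identity `−2𝒫Y = ∇(div_f Y) + ℒY + (1/2)Y`. -/
theorem stmt_0 (n : ℕ) (Y : En n → Fin n → ℝ) (hY : ContDiff ℝ (⊤ : ℕ∞) Y) (x : En n) (i : Fin n) :
    -2 * Pop Y x i = gradV (divf Y) x i + driftLapV Y x i + (1/2) * Y x i := by
  have hYi : ∀ j : Fin n, ContDiff ℝ (⊤ : ℕ∞) (fun y => Y y j) := fun j => (contDiff_pi.1 hY) j
  have dY : ∀ (j : Fin n) (y : En n), DifferentiableAt ℝ (fun z => Y z j) y :=
    fun j y => ((hYi j).differentiable (by simp)) y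
  have dpd : ∀ (k j : Fin n) (y : En n), DifferentiableAt ℝ (pd k (fun z => Y z j)) y :=
    fun k j y => ((contDiff_pd (hYi j) k).differentiable (by simp)) y
  have dcd : ∀ (j : Fin n) (y : En n), DifferentiableAt ℝ (fun z : En n => z j / 2) y := by
    intro j y
    have heq : (fun z : En n => z j / 2)
        = fun z => ((2:ℝ)⁻¹ • (EuclideanSpace.proj j : En n →L[ℝ] ℝ)) z := by
      funext z
      simp [ContinuousLinearMap.smul_apply]
      ring
    rw [heq]
    exact ((2:ℝ)⁻¹ • (EuclideanSpace.proj j : En n →L[ℝ] ℝ)).differentiableAt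
  -- Left-hand side
  have hL : -2 * Pop Y x i = ∑ j, ((pd i (pd j (fun y => Y y j)) x
      - pd i (fun y => Y y j) x * (x j / 2))
      + pd j (pd j (fun y => Y y i)) x - (x j / 2) * pd j (fun y => Y y i) x) := by
    have hterm : ∀ j : Fin n, pd j (fun y => divfStar Y y i j) x
        = -(pd j (pd i (fun y => Y y j)) x + pd j (pd j (fun y => Y y i)) x) / 2 :=
      fun j => pd_negadd_div2 j x (dpd i j x) (dpd j i x)
    rw [show Pop Y x i
        = ∑ j, (pd j (fun y => divfStar Y y i j) x - (x j / 2) * divfStar Y x i j) from rfl,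
      Finset.mul_sum]
    refine Finset.sum_congr rfl (fun j _ => ?_)
    rw [hterm j,
      show divfStar Y x i j
        = -(pd i (fun y => Y y j) x + pd j (fun y => Y y i) x) / 2 from rfl,
      pd_comm (hYi j) j i x]
    ring
  -- gradient of the weighted divergence
  have hG : gradV (divf Y) x i = (∑ j, (pd i (pd j (fun y => Y y j)) x
      - pd i (fun y => Y y j) x * (x j / 2))) - Y x i / 2 := by
    show pd i (fun y => ∑ j, (pd j (fun z => Y z j) y - Y y j * (y j / 2))) x = _
    rw [pd_sum Finset.univ (fun j y => pd j (fun z => Y z j) y - Y y j * (y j / 2)) i x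
      (fun j _ => (dpd j j x).sub ((dY j x).mul (dcd j x)))]
    have hterm : ∀ j : Fin n,
        pd i (fun y => pd j (fun z => Y z j) y - Y y j * (y j / 2)) x
        = pd i (pd j (fun z => Y z j)) x - (pd i (fun z => Y z j) x * (x j / 2)
            + Y x j * ((if j = i then 1 else 0) / 2)) := by
      intro j
      rw [pd_sub (h := fun y => Y y j * (y j / 2)) i x (dpd j j x) ((dY j x).mul (dcd j x)),
        pd_mul i x (dY j x) (dcd j x), pd_coord_div2 i j x]
    rw [Finset.sum_congr rfl (fun j _ => hterm j)]
    have hdelta : ∑ j, Y x j * ((if j = i then 1 else 0) / 2) = Y x i / 2 := by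
      rw [Finset.sum_eq_single i]
      · rw [if_pos rfl]; ring
      · intro b _ hb; simp [hb]
      · simp
    rw [show ∀ (A B C : Fin n → ℝ), ∑ j, (A j - (B j + C j))
        = (∑ j, (A j - B j)) - ∑ j, C j from fun A B C => by
          rw [← Finset.sum_sub_distrib]; exact Finset.sum_congr rfl (fun j _ => by ring),
      hdelta]
  -- drift Laplacian term
  have hD : driftLapV Y x i = (∑ j, pd j (pd j (fun y => Y y i)) x)
      - ∑ j, (x j / 2) * pd j (fun y => Y y i) x := rfl
  rw [hL, hG, hD]
  rw [show ∀ (A B C : Fin n → ℝ), ∑ j, (A j + B j - C j)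
      = (∑ j, A j) + ((∑ j, B j) - ∑ j, C j) from fun A B C => by
        rw [← Finset.sum_sub_distrib, ← Finset.sum_add_distrib]
        exact Finset.sum_congr rfl (fun j _ => by ring)]
  ring
end
end

section
/- Let f(x) = |x|²/4 on ℝⁿ and let Y : ℝⁿ → ℝ^d be smooth (a function or vector field) with ∫(|Y|² + |∇Y|²)e^{-f} dx < ∞. Then ∫ |Y(x)|² (|x|²/4 − n) e^{-f(x)} dx ≤ 4 ∫ |∇Y|² e^{-f} dx. -/
open MeasureTheory Real

noncomputable section

variable {n : ℕ}

/- ### Auxiliary lemmas -/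

theorem norm_sq_eq' (x : En n) : ‖x‖^2 = ∑ k, (x k)^2 := by
  rw [EuclideanSpace.norm_eq, Real.sq_sqrt (by positivity)]
  simp [sq_abs]

theorem gw_cont : Continuous (gw : En n → ℝ) := by
  have := Real.continuous_exp.comp ((((continuous_norm (E := En n))).pow 2).div_const 4).neg
  exact this

theorem hasFDerivAt_normSq (x : En n) :
    HasFDerivAt (fun y : En n => ‖y‖^2) ((2:ℝ) • (innerSL ℝ x)) x := by
  have h := (hasFDerivAt_id (𝕜 := ℝ) x).inner ℝ (hasFDerivAt_id x)
  have e : (fun y : En n => ‖y‖^2) = fun y : En n => (inner ℝ y y : ℝ) := by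
    ext y; rw [real_inner_self_eq_norm_sq]
  rw [e]
  refine h.congr_fderiv ?_
  ext v
  show (inner ℝ x v : ℝ) + (inner ℝ v x : ℝ) = (2:ℝ) * (inner ℝ x v : ℝ)
  rw [real_inner_comm v x]; ring

theorem hasFDerivAt_gw (x : En n) :
    HasFDerivAt (gw : En n → ℝ) ((-(gw x)/2) • (innerSL ℝ x)) x := by
  have h1 : HasFDerivAt (fun y : En n => -(‖y‖^2/4)) ((-(1:ℝ)/2) • (innerSL ℝ x)) x := by
    have h0 : (fun y : En n => -(‖y‖^2/4)) = fun y : En n => (-(1:ℝ)/4) * ‖y‖^2 := by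
      ext y; ring
    rw [h0]
    have := (hasFDerivAt_normSq x).const_mul (-(1:ℝ)/4)
    refine this.congr_fderiv ?_
    ext v; simp only [ContinuousLinearMap.smul_apply, smul_eq_mul]; ring
  have h2 := (Real.hasDerivAt_exp (-(‖x‖^2/4))).comp_hasFDerivAt x h1
  have h3 : HasFDerivAt (gw : En n → ℝ) _ x := h2
  refine h3.congr_fderiv ?_
  · ext v; simp only [ContinuousLinearMap.smul_apply, smul_eq_mul, gw]; ring

theorem fderiv_gw_apply (x v : En n) :
    fderiv ℝ (gw : En n → ℝ) x v = -(inner ℝ x v : ℝ)/2 * gw x := by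
  rw [(hasFDerivAt_gw x).fderiv]
  simp; ring

theorem key_fderiv {d : ℕ} (Y : En n → Fin d → ℝ) (i : Fin d)
    (hYi : Differentiable ℝ (fun y => Y y i)) (j : Fin n) (x : En n) :
    HasFDerivAt (fun y : En n => Y y i * Y y i * y j)
      ((Y x i * Y x i) • (EuclideanSpace.proj (𝕜 := ℝ) j)
        + (x j) • (Y x i • fderiv ℝ (fun y => Y y i) x + Y x i • fderiv ℝ (fun y => Y y i) x)) x :=
  ((hYi x).hasFDerivAt.mul (hYi x).hasFDerivAt).mul (EuclideanSpace.proj (𝕜 := ℝ) j).hasFDerivAt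

theorem key_fderiv_apply {d : ℕ} (Y : En n → Fin d → ℝ) (i : Fin d)
    (hYi : Differentiable ℝ (fun y => Y y i)) (j : Fin n) (x : En n) :
    fderiv ℝ (fun y : En n => Y y i * Y y i * y j) x (EuclideanSpace.single j 1)
      = Y x i * Y x i + 2 * (x j * Y x i * pd j (fun y => Y y i) x) := by
  rw [(key_fderiv Y i hYi j x).fderiv]
  simp [pd]
  ring

theorem ibp {d : ℕ} (Y : En n → Fin d → ℝ) (i : Fin d)
    (hYi : Differentiable ℝ (fun y => Y y i)) (j : Fin n)
    (h1 : Integrable (fun x : En n => (Y x i * Y x i * x j) * gw x))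
    (h2 : Integrable (fun x : En n => (Y x i * Y x i) * (x j)^2 * gw x))
    (h3 : Integrable (fun x : En n =>
      (2*(Y x i * Y x i) + 4*(x j * Y x i * pd j (fun y => Y y i) x)) * gw x)) :
    ∫ x : En n, (Y x i * Y x i) * (x j)^2 * gw x
      = ∫ x : En n, (2*(Y x i * Y x i) + 4*(x j * Y x i * pd j (fun y => Y y i) x)) * gw x := by
  have hgw : Differentiable ℝ (gw : En n → ℝ) := fun x => (hasFDerivAt_gw x).differentiableAt
  have hF : Differentiable ℝ (fun y : En n => Y y i * Y y i * y j) :=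
    fun x => (key_fderiv Y i hYi j x).differentiableAt
  have hgw' : ∀ x : En n, fderiv ℝ (gw : En n → ℝ) x (EuclideanSpace.single j 1)
      = -(x j)/2 * gw x := by
    intro x; rw [fderiv_gw_apply]; simp [EuclideanSpace.inner_single_right]
  have hF' := key_fderiv_apply Y i hYi j
  have e1 : (fun x : En n => (Y x i * Y x i * x j)
        * (fderiv ℝ (gw : En n → ℝ) x (EuclideanSpace.single j 1)))
      = fun x => (-(1:ℝ)/2) * ((Y x i * Y x i) * (x j)^2 * gw x) :=
    funext fun x => by rw [hgw' x]; ring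
  have e2 : (fun x : En n => (fderiv ℝ (fun y : En n => Y y i * Y y i * y j) x
        (EuclideanSpace.single j 1)) * gw x)
      = fun x => ((1:ℝ)/2) * ((2*(Y x i * Y x i)
          + 4*(x j * Y x i * pd j (fun y => Y y i) x)) * gw x) :=
    funext fun x => by rw [hF' x]; ring
  have hI2 : Integrable (fun x : En n => (Y x i * Y x i * x j)
      * (fderiv ℝ (gw : En n → ℝ) x (EuclideanSpace.single j 1))) := by
    rw [e1]; exact h2.const_mul _
  have hI3 : Integrable (fun x : En n => (fderiv ℝ (fun y : En n => Y y i * Y y i * y j) x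
      (EuclideanSpace.single j 1)) * gw x) := by
    rw [e2]; exact h3.const_mul _
  have key := integral_mul_fderiv_eq_neg_fderiv_mul_of_integrable
    (f := fun y : En n => Y y i * Y y i * y j) (g := (gw : En n → ℝ))
    (v := EuclideanSpace.single j 1) (μ := volume) hI3 hI2 h1 (fun x _ => hF x) (fun x _ => hgw x)
  rw [e1, e2, integral_const_mul, integral_const_mul] at key
  linarith

/-- Weighted concentration inequality on the Gaussian soliton: if `Y` is a smooth function or
vector field with `∫(|Y|² + |∇Y|²)e^{-f} < ∞`, then
`∫ |Y|² (|x|²/4 − n) e^{-f} ≤ 4 ∫ |∇Y|² e^{-f}`. -/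
theorem stmt_7 (n d : ℕ) (Y : En n → Fin d → ℝ) (hY : ContDiff ℝ (⊤ : ℕ∞) Y)
    (hint : Integrable (fun x : En n =>
      ((∑ i, (Y x i) ^ 2) + ∑ i, ∑ j, (pd j (fun y => Y y i) x) ^ 2) * gw x)) :
    ∫ x : En n, (∑ i, (Y x i) ^ 2) * (‖x‖ ^ 2 / 4 - n) * gw x
      ≤ 4 * ∫ x : En n, (∑ i, ∑ j, (pd j (fun y => Y y i) x) ^ 2) * gw x := by
  have hYi : ∀ i, ContDiff ℝ (⊤ : ℕ∞) (fun y => Y y i) := fun i =>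
    (ContinuousLinearMap.proj (R := ℝ) (φ := fun _ : Fin d => ℝ) i).contDiff.comp hY
  have hYc : ∀ i, Continuous (fun y => Y y i) := fun i => (hYi i).continuous
  have hpdc : ∀ (i : Fin d) (j : Fin n), Continuous (fun x => pd j (fun y => Y y i) x) := by
    intro i j
    have := ((hYi i).continuous_fderiv_apply (by simp)).comp
      (Continuous.prodMk continuous_id (continuous_const (y := (EuclideanSpace.single j (1:ℝ)))))
    exact this
  have hxc : ∀ j : Fin n, Continuous (fun x : En n => x j) := fun j =>
    (EuclideanSpace.proj (𝕜 := ℝ) j).continuous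
  have huc : Continuous (fun x : En n => ∑ i, (Y x i)^2) :=
    continuous_finset_sum _ fun i _ => (hYc i).pow 2
  have hGc : Continuous (fun x : En n => ∑ i, ∑ j, (pd j (fun y => Y y i) x)^2) :=
    continuous_finset_sum _ fun i _ => continuous_finset_sum _ fun j _ => (hpdc i j).pow 2
  have hgw0 : ∀ x : En n, 0 < gw x := fun x => Real.exp_pos _
  have hu0 : ∀ x : En n, 0 ≤ ∑ i, (Y x i)^2 := fun x => Finset.sum_nonneg fun i _ => sq_nonneg _
  have hG0 : ∀ x : En n, 0 ≤ ∑ i, ∑ j, (pd j (fun y => Y y i) x)^2 := fun x =>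
    Finset.sum_nonneg fun i _ => Finset.sum_nonneg fun j _ => sq_nonneg _
  -- the right-hand side integral is nonnegative
  have hRHS0 : 0 ≤ ∫ x : En n, (∑ i, ∑ j, (pd j (fun y => Y y i) x)^2) * gw x :=
    integral_nonneg fun x => mul_nonneg (hG0 x) (hgw0 x).le
  by_cases hL : Integrable (fun x : En n => (∑ i, (Y x i)^2) * (‖x‖ ^ 2 / 4 - n) * gw x)
  swap
  · rw [integral_undef hL]; linarith
  have hxj : ∀ (x : En n) (j : Fin n), (x j)^2 ≤ ‖x‖^2 := fun x j => by
    rw [norm_sq_eq']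
    exact Finset.single_le_sum (f := fun k => (x k)^2) (fun k _ => sq_nonneg _)
      (Finset.mem_univ j)
  have hYu : ∀ (x : En n) (i : Fin d), (Y x i)^2 ≤ ∑ i', (Y x i')^2 := fun x i =>
    Finset.single_le_sum (f := fun i' => (Y x i')^2) (fun _ _ => sq_nonneg _) (Finset.mem_univ i)
  have hpdG : ∀ (x : En n) (i : Fin d) (j : Fin n),
      (pd j (fun y => Y y i) x)^2 ≤ ∑ i', ∑ j', (pd j' (fun y => Y y i') x)^2 := fun x i j => by
    calc (pd j (fun y => Y y i) x)^2 ≤ ∑ j', (pd j' (fun y => Y y i) x)^2 :=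
          Finset.single_le_sum (f := fun j' => (pd j' (fun y => Y y i) x)^2)
            (fun _ _ => sq_nonneg _) (Finset.mem_univ j)
      _ ≤ _ := Finset.single_le_sum (f := fun i' => ∑ j', (pd j' (fun y => Y y i') x)^2)
            (fun _ _ => Finset.sum_nonneg fun _ _ => sq_nonneg _) (Finset.mem_univ i)
  -- basic integrable functions
  have hI1 : Integrable (fun x : En n => (∑ i, (Y x i)^2) * gw x) := by
    refine hint.mono' ((huc.mul gw_cont).aestronglyMeasurable) (ae_of_all _ fun x => ?_)
    rw [Real.norm_eq_abs, abs_of_nonneg (mul_nonneg (hu0 x) (hgw0 x).le)]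
    have := hG0 x
    nlinarith [hgw0 x]
  have hI2 : Integrable (fun x : En n => (∑ i, ∑ j, (pd j (fun y => Y y i) x)^2) * gw x) := by
    refine hint.mono' ((hGc.mul gw_cont).aestronglyMeasurable) (ae_of_all _ fun x => ?_)
    rw [Real.norm_eq_abs, abs_of_nonneg (mul_nonneg (hG0 x) (hgw0 x).le)]
    have := hu0 x
    nlinarith [hgw0 x]
  have hI3 : Integrable (fun x : En n => (∑ i, (Y x i)^2) * ‖x‖^2 * gw x) := by
    have h := (hL.const_mul 4).add (hI1.const_mul (4*(n:ℝ)))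
    refine h.congr (ae_of_all _ fun x => ?_)
    simp only [Pi.add_apply]
    ring
  have hIM : Integrable (fun x : En n =>
      ((∑ i, (Y x i)^2) * (1+‖x‖^2) + (∑ i, ∑ j, (pd j (fun y => Y y i) x)^2)) * gw x) := by
    have h := (hI1.add hI3).add hI2
    refine h.congr (ae_of_all _ fun x => ?_)
    simp only [Pi.add_apply]
    ring
  have hM0 : ∀ x : En n, 0 ≤ ((∑ i, (Y x i)^2) * (1+‖x‖^2)
      + (∑ i, ∑ j, (pd j (fun y => Y y i) x)^2)) * gw x := fun x => by
    have h1 := hu0 x; have h2 := hG0 x; have h3 := (hgw0 x).le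
    have h4 : (0:ℝ) ≤ ‖x‖^2 := sq_nonneg _
    positivity
  -- per-component integrability
  have hIa : ∀ (i : Fin d) (j : Fin n),
      Integrable (fun x : En n => Y x i * Y x i * (x j)^2 * gw x) := by
    intro i j
    refine hIM.mono' ((((hYc i).mul (hYc i)).mul ((hxc j).pow 2)).mul
      gw_cont).aestronglyMeasurable (ae_of_all _ fun x => ?_)
    rw [Real.norm_eq_abs, abs_of_nonneg (mul_nonneg (mul_nonneg
      (mul_self_nonneg _) (sq_nonneg _)) (hgw0 x).le)]
    have hcore : Y x i * Y x i * (x j)^2 ≤ (∑ i', (Y x i')^2) * (1+‖x‖^2)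
        + (∑ i', ∑ j', (pd j' (fun y => Y y i') x)^2) := by
      nlinarith [mul_le_mul (hYu x i) (hxj x j) (sq_nonneg (x j)) (hu0 x), hu0 x, hG0 x,
        sq_nonneg (Y x i)]
    exact mul_le_mul_of_nonneg_right hcore (hgw0 x).le
  have hIfg : ∀ (i : Fin d) (j : Fin n),
      Integrable (fun x : En n => Y x i * Y x i * x j * gw x) := by
    intro i j
    refine hIM.mono' ((((hYc i).mul (hYc i)).mul (hxc j)).mul
      gw_cont).aestronglyMeasurable (ae_of_all _ fun x => ?_)
    rw [Real.norm_eq_abs, abs_mul, abs_of_pos (hgw0 x)]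
    refine mul_le_mul_of_nonneg_right ?_ (hgw0 x).le
    have h2 : |Y x i * Y x i * x j| = (Y x i)^2 * |x j| := by
      rw [abs_mul, abs_mul_self]; ring_nf
    have h3 : |x j| ≤ (1 + ‖x‖^2)/2 := by
      nlinarith [sq_abs (x j), sq_nonneg (|x j| - 1), hxj x j, abs_nonneg (x j)]
    rw [h2]
    have := mul_le_mul (hYu x i) h3 (abs_nonneg _) (hu0 x)
    nlinarith [hu0 x, hG0 x, sq_nonneg ‖x‖]
  have hIb : ∀ i : Fin d, Integrable (fun x : En n => Y x i * Y x i * gw x) := by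
    intro i
    refine hIM.mono' (((hYc i).mul (hYc i)).mul gw_cont).aestronglyMeasurable
      (ae_of_all _ fun x => ?_)
    rw [Real.norm_eq_abs, abs_of_nonneg (mul_nonneg (mul_self_nonneg _) (hgw0 x).le)]
    refine mul_le_mul_of_nonneg_right ?_ (hgw0 x).le
    nlinarith [hYu x i, hu0 x, hG0 x, sq_nonneg ‖x‖]
  have hIc : ∀ (i : Fin d) (j : Fin n),
      Integrable (fun x : En n => x j * Y x i * pd j (fun y => Y y i) x * gw x) := by
    intro i j
    refine hIM.mono' ((((hxc j).mul (hYc i)).mul (hpdc i j)).mul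
      gw_cont).aestronglyMeasurable (ae_of_all _ fun x => ?_)
    rw [Real.norm_eq_abs, abs_mul, abs_of_pos (hgw0 x)]
    refine mul_le_mul_of_nonneg_right ?_ (hgw0 x).le
    rw [abs_mul]
    have hab : |x j * Y x i| * |pd j (fun y => Y y i) x|
        ≤ ((x j * Y x i)^2 + (pd j (fun y => Y y i) x)^2)/2 := by
      nlinarith [sq_nonneg (|x j * Y x i| - |pd j (fun y => Y y i) x|),
        sq_abs (x j * Y x i), sq_abs (pd j (fun y => Y y i) x)]
    have hab2 : (x j * Y x i)^2 ≤ (∑ i', (Y x i')^2) * ‖x‖^2 := by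
      have : (x j * Y x i)^2 = (Y x i)^2 * (x j)^2 := by ring
      rw [this]
      exact mul_le_mul (hYu x i) (hxj x j) (sq_nonneg _) (hu0 x)
    nlinarith [hpdG x i j, hu0 x, hG0 x, sq_nonneg ‖x‖]
  have hI2b4c : ∀ (i : Fin d) (j : Fin n), Integrable (fun x : En n =>
      (2*(Y x i * Y x i) + 4*(x j * Y x i * pd j (fun y => Y y i) x)) * gw x) := by
    intro i j
    have h := ((hIb i).const_mul 2).add ((hIc i j).const_mul 4)
    refine h.congr (ae_of_all _ fun x => ?_)
    simp only [Pi.add_apply]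
    ring
  -- the integration-by-parts identities
  have key2 : ∀ (i : Fin d) (j : Fin n),
      ∫ x : En n, Y x i * Y x i * (x j)^2 * gw x
        = ∫ x : En n, (2*(Y x i * Y x i) + 4*(x j * Y x i * pd j (fun y => Y y i) x)) * gw x :=
    fun i j => ibp Y i ((hYi i).differentiable (by simp)) j (hIfg i j) (hIa i j) (hI2b4c i j)
  have hsplit : ∀ (i : Fin d) (j : Fin n),
      ∫ x : En n, (2*(Y x i * Y x i) + 4*(x j * Y x i * pd j (fun y => Y y i) x)) * gw x
        = 2 * (∫ x : En n, Y x i * Y x i * gw x)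
          + 4 * (∫ x : En n, x j * Y x i * pd j (fun y => Y y i) x * gw x) := by
    intro i j
    rw [show (fun x : En n =>
          (2*(Y x i * Y x i) + 4*(x j * Y x i * pd j (fun y => Y y i) x)) * gw x)
        = fun x : En n => 2 * (Y x i * Y x i * gw x)
          + 4 * (x j * Y x i * pd j (fun y => Y y i) x * gw x) from funext fun x => by ring,
      integral_add ((hIb i).const_mul 2) ((hIc i j).const_mul 4),
      integral_const_mul, integral_const_mul]
  -- expansion of the weighted integrals as double sums
  have hAeq : ∫ x : En n, (∑ i, (Y x i)^2) * ‖x‖^2 * gw x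
      = ∑ i, ∑ j, ∫ x : En n, Y x i * Y x i * (x j)^2 * gw x := by
    rw [show (fun x : En n => (∑ i, (Y x i)^2) * ‖x‖^2 * gw x)
        = fun x : En n => ∑ i, ∑ j, Y x i * Y x i * (x j)^2 * gw x from funext fun x => by
      rw [norm_sq_eq' x, Finset.sum_mul_sum, Finset.sum_mul]
      refine Finset.sum_congr rfl fun i _ => ?_
      rw [Finset.sum_mul]
      exact Finset.sum_congr rfl fun j _ => by ring]
    rw [integral_finset_sum _ fun i _ => integrable_finset_sum _ fun j _ => hIa i j]
    exact Finset.sum_congr rfl fun i _ => integral_finset_sum _ fun j _ => hIa i j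
  have hBeq : ∫ x : En n, (∑ i, (Y x i)^2) * gw x
      = ∑ i, ∫ x : En n, Y x i * Y x i * gw x := by
    rw [show (fun x : En n => (∑ i, (Y x i)^2) * gw x)
        = fun x : En n => ∑ i, Y x i * Y x i * gw x from funext fun x => by
      rw [Finset.sum_mul]
      exact Finset.sum_congr rfl fun i _ => by ring]
    exact integral_finset_sum _ fun i _ => hIb i
  have hIS : Integrable (fun x : En n =>
      (∑ i, ∑ j, x j * Y x i * pd j (fun y => Y y i) x) * gw x) := by
    have h := integrable_finset_sum (μ := volume) Finset.univ
      (fun (i : Fin d) _ => integrable_finset_sum (μ := volume) Finset.univ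
        (fun (j : Fin n) _ => hIc i j))
    refine h.congr (ae_of_all _ fun x => ?_)
    simp only [Finset.sum_mul]
  have hSeq : ∫ x : En n, (∑ i, ∑ j, x j * Y x i * pd j (fun y => Y y i) x) * gw x
      = ∑ i, ∑ j, ∫ x : En n, x j * Y x i * pd j (fun y => Y y i) x * gw x := by
    rw [show (fun x : En n => (∑ i, ∑ j, x j * Y x i * pd j (fun y => Y y i) x) * gw x)
        = fun x : En n => ∑ i, ∑ j, x j * Y x i * pd j (fun y => Y y i) x * gw x from
      funext fun x => by
        rw [Finset.sum_mul]
        exact Finset.sum_congr rfl fun i _ => by rw [Finset.sum_mul]]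
    rw [integral_finset_sum _ fun i _ => integrable_finset_sum _ fun j _ => hIc i j]
    exact Finset.sum_congr rfl fun i _ => integral_finset_sum _ fun j _ => hIc i j
  -- main identity : A = 2 n B + 4 S
  have hmain : ∫ x : En n, (∑ i, (Y x i)^2) * ‖x‖^2 * gw x
      = 2 * n * (∫ x : En n, (∑ i, (Y x i)^2) * gw x)
        + 4 * (∫ x : En n, (∑ i, ∑ j, x j * Y x i * pd j (fun y => Y y i) x) * gw x) := by
    rw [hAeq, hBeq, hSeq]
    calc ∑ i, ∑ j, ∫ x : En n, Y x i * Y x i * (x j)^2 * gw x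
        = ∑ i, ∑ j : Fin n, (2 * (∫ x : En n, Y x i * Y x i * gw x)
            + 4 * (∫ x : En n, x j * Y x i * pd j (fun y => Y y i) x * gw x)) :=
          Finset.sum_congr rfl fun i _ => Finset.sum_congr rfl fun j _ => by
            rw [key2 i j, hsplit i j]
      _ = ∑ i, (2 * n * (∫ x : En n, Y x i * Y x i * gw x)
            + 4 * ∑ j, (∫ x : En n, x j * Y x i * pd j (fun y => Y y i) x * gw x)) :=
          Finset.sum_congr rfl fun i _ => by
            rw [Finset.sum_add_distrib, Finset.sum_const, Finset.card_univ, Fintype.card_fin,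
              ← Finset.mul_sum, nsmul_eq_mul]
            push_cast
            ring
      _ = _ := by
          rw [Finset.sum_add_distrib, ← Finset.mul_sum, ← Finset.mul_sum]
  -- Cauchy–Schwarz / Young estimate on the cross term
  have hIR : Integrable (fun x : En n =>
      ((∑ i, (Y x i)^2) * ‖x‖^2/8 + 2 * (∑ i, ∑ j, (pd j (fun y => Y y i) x)^2)) * gw x) := by
    have h := (hI3.const_mul (1/8)).add (hI2.const_mul 2)
    refine h.congr (ae_of_all _ fun x => ?_)
    simp only [Pi.add_apply]
    ring
  have hScore : ∀ x : En n, (∑ i, ∑ j, x j * Y x i * pd j (fun y => Y y i) x)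
      ≤ (∑ i, (Y x i)^2) * ‖x‖^2/8 + 2 * (∑ i, ∑ j, (pd j (fun y => Y y i) x)^2) := by
    intro x
    calc (∑ i, ∑ j, x j * Y x i * pd j (fun y => Y y i) x)
        ≤ ∑ i, ∑ j, ((x j * Y x i)^2/8 + 2*(pd j (fun y => Y y i) x)^2) :=
          Finset.sum_le_sum fun i _ => Finset.sum_le_sum fun j _ => by
            nlinarith [sq_nonneg (x j * Y x i - 4 * pd j (fun y => Y y i) x)]
      _ = (∑ i, (Y x i)^2) * ‖x‖^2/8 + 2 * (∑ i, ∑ j, (pd j (fun y => Y y i) x)^2) := by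
          simp only [Finset.sum_add_distrib]
          congr 1
          · rw [norm_sq_eq' x, Finset.sum_mul_sum, Finset.sum_div]
            refine Finset.sum_congr rfl fun i _ => ?_
            rw [Finset.sum_div]
            exact Finset.sum_congr rfl fun j _ => by ring
          · rw [Finset.mul_sum]
            exact Finset.sum_congr rfl fun i _ => by rw [Finset.mul_sum]
  have hSle : ∫ x : En n, (∑ i, ∑ j, x j * Y x i * pd j (fun y => Y y i) x) * gw x
      ≤ (1/8) * (∫ x : En n, (∑ i, (Y x i)^2) * ‖x‖^2 * gw x)
        + 2 * (∫ x : En n, (∑ i, ∑ j, (pd j (fun y => Y y i) x)^2) * gw x) := by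
    have h := integral_mono hIS hIR
      (fun x => mul_le_mul_of_nonneg_right (hScore x) (hgw0 x).le)
    rw [show (fun x : En n =>
          ((∑ i, (Y x i)^2) * ‖x‖^2/8 + 2 * (∑ i, ∑ j, (pd j (fun y => Y y i) x)^2)) * gw x)
        = fun x : En n => (1/8) * ((∑ i, (Y x i)^2) * ‖x‖^2 * gw x)
          + 2 * ((∑ i, ∑ j, (pd j (fun y => Y y i) x)^2) * gw x) from funext fun x => by ring,
      integral_add (hI3.const_mul (1/8)) (hI2.const_mul 2),
      integral_const_mul, integral_const_mul] at h
    exact h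
  -- rewrite the left-hand side of the goal
  have hLHS : ∫ x : En n, (∑ i, (Y x i)^2) * (‖x‖ ^ 2 / 4 - n) * gw x
      = (1/4) * (∫ x : En n, (∑ i, (Y x i)^2) * ‖x‖^2 * gw x)
        - n * (∫ x : En n, (∑ i, (Y x i)^2) * gw x) := by
    rw [show (fun x : En n => (∑ i, (Y x i)^2) * (‖x‖ ^ 2 / 4 - n) * gw x)
        = fun x : En n => (1/4) * ((∑ i, (Y x i)^2) * ‖x‖^2 * gw x)
          - (n:ℝ) * ((∑ i, (Y x i)^2) * gw x) from funext fun x => by ring,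
      integral_sub (hI3.const_mul (1/4)) (hI1.const_mul (n:ℝ)),
      integral_const_mul, integral_const_mul]
  rw [hLHS]
  linarith
end
end

section
/- Given m ∈ ℕ with m ≥ 1, ε ∈ (0, 1/2), and p, q > 0, there exists a constant c = c(m, p, q, ε) such that for every measurable function η : ℝ^m → ℝ satisfying |η(x)| ≤ 1 + |x|^q for all x, one has ∫ η(x)² |x|^p e^{-|x|²/4} dx ≤ c·(∫ η(x)² e^{-|x|²/4} dx)^{(2−ε)/2}. -/
open MeasureTheory Real

noncomputable section

variable {n : ℕ}

/-!
With `θ = (2 - ε)/2` and `w = (1 + |x|^q)² |x|^{p/(1-θ)}`, the bound `η² ≤ (1 + |x|^q)²` gives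
pointwise `η² |x|^p e^{-|x|²/4} ≤ (η² e^{-|x|²/4})^θ (w e^{-|x|²/4})^{1-θ}`. Hölder's inequality
with exponents `1/θ` and `1/(1-θ)` bounds the integral of the right-hand side by
`(∫ η² e^{-|x|²/4})^θ (∫ w e^{-|x|²/4})^{1-θ}`, and the last factor is a finite constant because
polynomial growth is integrable against a Gaussian.
-/

namespace MeasureTheory

variable {α : Type*} [MeasurableSpace α] {μ : Measure α} {f g : α → ℝ} {θ : ℝ}

theorem Integrable.memLp_rpow (hf0 : 0 ≤ f) (hf : Integrable f μ) {s : ℝ} (hs : 0 < s) :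
    MemLp (fun x => f x ^ s) (ENNReal.ofReal s⁻¹) μ := by
  have := (memLp_one_iff_integrable.2 hf).norm_rpow_div (ENNReal.ofReal s)
  rw [ENNReal.toReal_ofReal hs.le, one_div, ← ENNReal.ofReal_inv_of_pos hs] at this
  simpa only [Real.norm_of_nonneg (hf0 _)] using this

theorem integrable_rpow_mul_rpow (hf0 : 0 ≤ f) (hg0 : 0 ≤ g) (hf : Integrable f μ)
    (hg : Integrable g μ) (hθ₀ : 0 < θ) (hθ₁ : θ < 1) :
    Integrable (fun x => f x ^ θ * g x ^ (1 - θ)) μ :=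
  have := (Real.HolderConjugate.inv_one_sub_inv hθ₀ hθ₁).ennrealOfReal
  (hf.memLp_rpow hf0 hθ₀).integrable_mul (hg.memLp_rpow hg0 (sub_pos.2 hθ₁))

theorem integral_rpow_mul_rpow_le (hf0 : 0 ≤ f) (hg0 : 0 ≤ g) (hf : Integrable f μ)
    (hg : Integrable g μ) (hθ₀ : 0 < θ) (hθ₁ : θ < 1) :
    ∫ x, f x ^ θ * g x ^ (1 - θ) ∂μ ≤ (∫ x, f x ∂μ) ^ θ * (∫ x, g x ∂μ) ^ (1 - θ) := by
  have rpow_rpow_inv : ∀ {h : α → ℝ}, 0 ≤ h → ∀ {s : ℝ}, s ≠ 0 →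
      (fun x => (h x ^ s) ^ s⁻¹) = h := fun h0 _ hs =>
    funext fun x => by rw [← Real.rpow_mul (h0 x), mul_inv_cancel₀ hs, Real.rpow_one]
  have holder := integral_mul_le_Lp_mul_Lq_of_nonneg
    (Real.HolderConjugate.inv_one_sub_inv hθ₀ hθ₁)
    (ae_of_all _ fun x => Real.rpow_nonneg (hf0 x) θ)
    (ae_of_all _ fun x => Real.rpow_nonneg (hg0 x) (1 - θ))
    (hf.memLp_rpow hf0 hθ₀) (hg.memLp_rpow hg0 (sub_pos.2 hθ₁))
  simpa only [rpow_rpow_inv hf0 hθ₀.ne', rpow_rpow_inv hg0 (sub_pos.2 hθ₁).ne', one_div,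
    inv_inv] using holder

end MeasureTheory

theorem mul_mul_le_rpow_mul_rpow {u v s w θ : ℝ} (hu : 0 ≤ u) (huv : u ≤ v) (hs : 0 ≤ s)
    (hw : 0 ≤ w) (hθ : θ < 1) :
    u * s * w ≤ (u * w) ^ θ * (v * s ^ (1 - θ)⁻¹ * w) ^ (1 - θ) := by
  have hv : 0 ≤ v := hu.trans huv
  have h1θ : 0 < 1 - θ := sub_pos.2 hθ
  calc u * s * w = u ^ θ * u ^ (1 - θ) * s * w := by
        rw [← Real.rpow_add' hu (by norm_num), add_sub_cancel, Real.rpow_one]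
    _ ≤ u ^ θ * v ^ (1 - θ) * s * w := by gcongr
    _ = u ^ θ * v ^ (1 - θ) * s * (w ^ θ * w ^ (1 - θ)) := by
        rw [← Real.rpow_add' hw (by norm_num), add_sub_cancel, Real.rpow_one]
    _ = (u * w) ^ θ * (v * s ^ (1 - θ)⁻¹ * w) ^ (1 - θ) := by
        rw [Real.mul_rpow hu hw, Real.mul_rpow (by positivity) hw,
          Real.mul_rpow hv (by positivity), ← Real.rpow_mul hs, inv_mul_cancel₀ h1θ.ne',
          Real.rpow_one]
        ring

theorem one_add_rpow_sq_le {t q : ℝ} (ht : 0 ≤ t) (hq : 0 ≤ q) :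
    (1 + t ^ q) ^ 2 ≤ 4 * (1 + t) ^ (2 * q) := by
  have h1t : 1 ≤ 1 + t := by linarith
  have hle : 1 + t ^ q ≤ 2 * (1 + t) ^ q := by
    have : 1 ≤ (1 + t) ^ q := Real.one_le_rpow h1t hq
    have : t ^ q ≤ (1 + t) ^ q := by gcongr; linarith
    linarith
  calc (1 + t ^ q) ^ 2 ≤ (2 * (1 + t) ^ q) ^ 2 := by gcongr
    _ = 4 * (1 + t) ^ (2 * q) := by
        rw [mul_pow, mul_comm 2 q, Real.rpow_mul (by linarith), Real.rpow_two]; norm_num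

theorem one_add_rpow_mul_exp_neg_mul_sq_le {c b t : ℝ} (hb : 0 < b) (ht : 0 ≤ t) :
    (1 + t) ^ c * exp (-b * t ^ 2) ≤ exp (c ^ 2 / (4 * b)) := by
  have h1t : 1 ≤ 1 + t := by linarith
  calc (1 + t) ^ c * exp (-b * t ^ 2)
      ≤ exp t ^ |c| * exp (-b * t ^ 2) := by
        gcongr
        calc (1 + t) ^ c ≤ (1 + t) ^ |c| := Real.rpow_le_rpow_of_exponent_le h1t (le_abs_self c)
          _ ≤ exp t ^ |c| := by gcongr; linarith [Real.add_one_le_exp t]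
    _ = exp (|c| * t - b * t ^ 2) := by
        rw [← Real.exp_mul, ← Real.exp_add]; ring_nf
    _ ≤ exp (c ^ 2 / (4 * b)) := by
        gcongr
        rw [le_div_iff₀ (by positivity), ← sq_abs c]
        nlinarith [sq_nonneg (2 * b * t - |c|)]

theorem integrable_one_add_norm_rpow_mul_exp_neg_mul_sq {E : Type*} [NormedAddCommGroup E]
    [NormedSpace ℝ E] [FiniteDimensional ℝ E] [MeasurableSpace E] [BorelSpace E]
    (μ : Measure E) [μ.IsAddHaarMeasure] (a : ℝ) {b : ℝ} (hb : 0 < b) :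
    Integrable (fun x => (1 + ‖x‖) ^ a * exp (-b * ‖x‖ ^ 2)) μ := by
  set r : ℝ := Module.finrank ℝ E + 1
  refine ((integrable_one_add_norm (μ := μ) (r := r) (by linarith)).const_mul
    (exp ((a + r) ^ 2 / (4 * b)))).mono' (by fun_prop) (ae_of_all _ fun x => ?_)
  have h1x : 0 < 1 + ‖x‖ := by positivity
  rw [Real.norm_of_nonneg (by positivity)]
  calc (1 + ‖x‖) ^ a * exp (-b * ‖x‖ ^ 2)
      = (1 + ‖x‖) ^ (a + r) * exp (-b * ‖x‖ ^ 2) * (1 + ‖x‖) ^ (-r) := by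
        rw [mul_right_comm, ← Real.rpow_add h1x, add_neg_cancel_right]
    _ ≤ exp ((a + r) ^ 2 / (4 * b)) * (1 + ‖x‖) ^ (-r) := by
        gcongr
        exact one_add_rpow_mul_exp_neg_mul_sq_le hb (norm_nonneg x)

theorem gw_pos {n : ℕ} (x : En n) : 0 < gw x := exp_pos _

theorem gw_eq_exp_neg_mul_sq {n : ℕ} (x : En n) : gw x = exp (-(1 / 4) * ‖x‖ ^ 2) := by
  rw [gw]; ring_nf

theorem integrable_mul_gw_of_abs_le {n : ℕ} {f : En n → ℝ} (hf : AEStronglyMeasurable f)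
    {C a : ℝ} (hfC : ∀ x, |f x| ≤ C * (1 + ‖x‖) ^ a) : Integrable (fun x => f x * gw x) := by
  refine ((integrable_one_add_norm_rpow_mul_exp_neg_mul_sq volume a
    (by norm_num : (0 : ℝ) < 1 / 4)).const_mul C).mono'
    (hf.mul (by rw [funext gw_eq_exp_neg_mul_sq]; fun_prop)) (ae_of_all _ fun x => ?_)
  rw [norm_mul, Real.norm_eq_abs, gw_eq_exp_neg_mul_sq, Real.norm_of_nonneg (exp_pos _).le,
    ← mul_assoc]
  gcongr
  exact hfC x

theorem stmt_19_general (m : ℕ) (ε : ℝ) (hε : ε ∈ Set.Ioo (0 : ℝ) (1/2))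
    (p q : ℝ) (hp : 0 < p) (hq : 0 < q) :
    ∃ c : ℝ, ∀ η : En m → ℝ, Measurable η → (∀ x, |η x| ≤ 1 + ‖x‖ ^ q) →
      ∫ x : En m, (η x) ^ 2 * ‖x‖ ^ p * gw x
        ≤ c * (∫ x : En m, (η x) ^ 2 * gw x) ^ ((2 - ε) / 2) := by
  obtain ⟨hε₀, hε₁⟩ := hε
  set θ : ℝ := (2 - ε) / 2
  have hθ₀ : 0 < θ := by show 0 < (2 - ε) / 2; linarith
  have hθ₁ : θ < 1 := by show (2 - ε) / 2 < 1; linarith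
  set w : En m → ℝ := fun x => (1 + ‖x‖ ^ q) ^ 2 * (‖x‖ ^ p) ^ (1 - θ)⁻¹
  refine ⟨(∫ x, w x * gw x) ^ (1 - θ), fun η hη hη_le => ?_⟩
  have hη_sq (x : En m) : η x ^ 2 ≤ (1 + ‖x‖ ^ q) ^ 2 :=
    sq_le_sq' (abs_le.1 (hη_le x)).1 (abs_le.1 (hη_le x)).2
  have hf0 : 0 ≤ fun x => η x ^ 2 * gw x := fun x => mul_nonneg (sq_nonneg _) (gw_pos x).le
  have hg0 : 0 ≤ fun x => w x * gw x := fun x => mul_nonneg (by positivity) (gw_pos x).le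
  have hf : Integrable (fun x => η x ^ 2 * gw x) := by
    refine integrable_mul_gw_of_abs_le (C := 4) (a := 2 * q)
      (hη.pow_const 2).aestronglyMeasurable fun x => ?_
    rw [abs_of_nonneg (sq_nonneg _)]
    exact (hη_sq x).trans (one_add_rpow_sq_le (norm_nonneg x) hq.le)
  have hg : Integrable (fun x => w x * gw x) := by
    refine integrable_mul_gw_of_abs_le (C := 4) (a := 2 * q + p * (1 - θ)⁻¹)
      (by fun_prop) fun x => ?_
    rw [abs_of_nonneg (by positivity), Real.rpow_add (by positivity), ← mul_assoc]
    show (1 + ‖x‖ ^ q) ^ 2 * (‖x‖ ^ p) ^ (1 - θ)⁻¹ ≤ _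
    rw [← Real.rpow_mul (norm_nonneg x)]
    gcongr
    · exact one_add_rpow_sq_le (norm_nonneg x) hq.le
    · linarith
  calc ∫ x, η x ^ 2 * ‖x‖ ^ p * gw x
      ≤ ∫ x, (η x ^ 2 * gw x) ^ θ * (w x * gw x) ^ (1 - θ) :=
        integral_mono_of_nonneg
          (ae_of_all _ fun x => mul_nonneg (by positivity) (gw_pos x).le)
          (integrable_rpow_mul_rpow hf0 hg0 hf hg hθ₀ hθ₁)
          (ae_of_all _ fun x => mul_mul_le_rpow_mul_rpow (sq_nonneg _) (hη_sq x)
            (by positivity) (gw_pos x).le hθ₁)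
    _ ≤ (∫ x, η x ^ 2 * gw x) ^ θ * (∫ x, w x * gw x) ^ (1 - θ) :=
        integral_rpow_mul_rpow_le hf0 hg0 hf hg hθ₀ hθ₁
    _ = (∫ x, w x * gw x) ^ (1 - θ) * (∫ x, η x ^ 2 * gw x) ^ θ := mul_comm _ _

/-- Interpolation lemma: given `m ≥ 1`, `ε ∈ (0,1/2)` and `p, q > 0`, there is
`c = c(m,p,q,ε)` so that every measurable `η : ℝ^m → ℝ` with `|η(x)| ≤ 1 + |x|^q` satisfies
`∫ η² |x|^p e^{-|x|²/4} ≤ c (∫ η² e^{-|x|²/4})^{(2-ε)/2}`. -/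
theorem stmt_19 (m : ℕ) (hm : 1 ≤ m) (ε : ℝ) (hε : ε ∈ Set.Ioo (0 : ℝ) (1/2))
    (p q : ℝ) (hp : 0 < p) (hq : 0 < q) :
    ∃ c : ℝ, ∀ η : En m → ℝ, Measurable η → (∀ x, |η x| ≤ 1 + ‖x‖ ^ q) →
      ∫ x : En m, (η x) ^ 2 * ‖x‖ ^ p * gw x
        ≤ c * (∫ x : En m, (η x) ^ 2 * gw x) ^ ((2 - ε) / 2) :=
  stmt_19_general m ε hε p q hp hq
end
end
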